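/- If x, y ∈ H_{p,t,s} satisfy o(x) = p^t, o(y) = p^s, and ⟨x, y⟩ = H_{p,t,s}, then there exists an automorphism of H_{p,t,s} mapping a to x and b to y. -/

import Mathlib

open scoped commutatorElement

/-- Relations for the inner-abelian non-metacyclic p-group
`H_{p,t,s} = ⟨a, b, c | a^(p^t) = b^(p^s) = c^p = 1, [a,b] = c, [c,a] = [c,b] = 1⟩`. -/
def HRels (p t s : ℕ) : Set (FreeGroup (Fin 3)) :=
  {FreeGroup.of (0 : Fin 3) ^ p ^ t, FreeGroup.of (1 : Fin 3) ^ p ^ s, FreeGroup.of (2 : Fin 3) ^ p,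
   ⁅FreeGroup.of (0 : Fin 3), FreeGroup.of (1 : Fin 3)⁆ * (FreeGroup.of (2 : Fin 3))⁻¹,
   ⁅FreeGroup.of (2 : Fin 3), FreeGroup.of (0 : Fin 3)⁆, ⁅FreeGroup.of (2 : Fin 3), FreeGroup.of (1 : Fin 3)⁆}

/-- The group `H_{p,t,s}` as a presented group. -/
abbrev Hgrp (p t s : ℕ) := PresentedGroup (HRels p t s)

/-- The generator `a` of `H_{p,t,s}`. -/
def aa (p t s : ℕ) : Hgrp p t s := PresentedGroup.of (0 : Fin 3)

/-- The generator `b` of `H_{p,t,s}`. -/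
def bb (p t s : ℕ) : Hgrp p t s := PresentedGroup.of (1 : Fin 3)

/-- The generator `c = [a,b]` of `H_{p,t,s}`. -/
def cc (p t s : ℕ) : Hgrp p t s := PresentedGroup.of (2 : Fin 3)

/-!
In a group generated by `a` and `b` in which `[a, b]` commutes with `a` and `b`, every commutator
is a power of `[a, b]`: modulo the central subgroup `⟨[a, b]⟩` the two generators commute, so the
quotient is abelian. In `H_{p,t,s}` this makes every `[x, y]` central of order dividing `p`, so
`a ↦ x`, `b ↦ y` respects the defining relations whenever `x ^ p^t = y ^ p^s = 1`. The resulting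
endomorphism is onto because `x, y` generate, hence bijective because `H_{p,t,s}` is finite
(an abelian quotient generated by two torsion elements, extended by the cyclic group `⟨c⟩`).
-/

open Subgroup
open scoped Pointwise

section TwoGenerated

variable {G : Type*} [Group G] {a b : G}

theorem commute_of_closure_pair_eq_top (hG : closure {a, b} = ⊤) {z : G}
    (hza : Commute z a) (hzb : Commute z b) (g : G) : Commute z g := by
  have hz : z ∈ centralizer (closure {a, b}) := by
    rw [centralizer_closure]
    rintro _ (rfl | rfl)
    exacts [hza.eq.symm, hzb.eq.symm]
  rw [hG] at hz
  exact (mem_centralizer_iff.mp hz g (mem_top g)).symm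

theorem commute_of_closure_pair_eq_top_of_commute (hG : closure {a, b} = ⊤) (hab : Commute a b)
    (g h : G) : Commute g h :=
  have hha : Commute h a := (commute_of_closure_pair_eq_top hG (.refl a) hab h).symm
  have hhb : Commute h b := (commute_of_closure_pair_eq_top hG hab.symm (.refl b) h).symm
  (commute_of_closure_pair_eq_top hG hha hhb g).symm

theorem closure_pair_map_eq_top {H : Type*} [Group H] {f : G →* H}
    (hf : Function.Surjective f) (hG : closure {a, b} = ⊤) : closure {f a, f b} = ⊤ := by
  rw [← Set.image_pair, ← MonoidHom.map_closure, hG, map_top_of_surjective f hf]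

theorem zpowers_normal_of_commute (hG : closure {a, b} = ⊤) {z : G}
    (hza : Commute z a) (hzb : Commute z b) : (zpowers z).Normal := by
  refine ⟨fun n hn g => ?_⟩
  obtain ⟨k, rfl⟩ := mem_zpowers_iff.mp hn
  rw [← ((commute_of_closure_pair_eq_top hG hza hzb g).zpow_left k).eq, mul_inv_cancel_right]
  exact hn

theorem commute_mk_of_commutatorElement_mem (hG : closure {a, b} = ⊤) (N : Subgroup G) [N.Normal]
    (hN : ⁅a, b⁆ ∈ N) (g h : G) : Commute (g : G ⧸ N) h := by
  refine commute_of_closure_pair_eq_top_of_commute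
    (closure_pair_map_eq_top (QuotientGroup.mk'_surjective N) hG) ?_ _ _
  rw [← commutatorElement_eq_one_iff_commute, ← map_commutatorElement]
  exact (QuotientGroup.eq_one_iff _).mpr hN

theorem commutatorElement_mem_zpowers (hG : closure {a, b} = ⊤) (ha : Commute ⁅a, b⁆ a)
    (hb : Commute ⁅a, b⁆ b) (g h : G) : ⁅g, h⁆ ∈ zpowers ⁅a, b⁆ := by
  have := zpowers_normal_of_commute hG ha hb
  rw [← QuotientGroup.eq_one_iff, ← QuotientGroup.mk'_apply, map_commutatorElement,
    commutatorElement_eq_one_iff_commute]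
  exact commute_mk_of_commutatorElement_mem hG _ (mem_zpowers _) g h

theorem finite_of_closure_pair_eq_top_of_commute (hG : closure {a, b} = ⊤) (hab : Commute a b)
    (ha : IsOfFinOrder a) (hb : IsOfFinOrder b) : Finite G := by
  let _ : CommGroup G :=
    { mul_comm := fun g h => (commute_of_closure_pair_eq_top_of_commute hG hab g h).eq }
  have hsub : Set.univ ⊆ (zpowers a : Set G) * (zpowers b : Set G) := by
    intro g _
    obtain ⟨m, n, rfl⟩ := mem_closure_pair.mp (hG ▸ mem_top g)
    exact Set.mul_mem_mul (zpow_mem_zpowers a m) (zpow_mem_zpowers b n)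
  exact Set.finite_univ_iff.mp ((finite_zpowers.mpr ha).mul (finite_zpowers.mpr hb) |>.subset hsub)

theorem finite_of_closure_pair_eq_top (hG : closure {a, b} = ⊤) (ha : IsOfFinOrder a)
    (hb : IsOfFinOrder b) (hca : Commute ⁅a, b⁆ a) (hcb : Commute ⁅a, b⁆ b)
    (hc : IsOfFinOrder ⁅a, b⁆) : Finite G := by
  have := zpowers_normal_of_commute hG hca hcb
  have : Finite (G ⧸ zpowers ⁅a, b⁆) :=
    finite_of_closure_pair_eq_top_of_commute
      (closure_pair_map_eq_top (QuotientGroup.mk'_surjective _) hG)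
      (commute_mk_of_commutatorElement_mem hG _ (mem_zpowers _) a b)
      ((QuotientGroup.mk' _).isOfFinOrder ha) ((QuotientGroup.mk' _).isOfFinOrder hb)
  exact (finite_iff_finite_and_finiteIndex (H := zpowers ⁅a, b⁆)).mpr
    ⟨(finite_zpowers.mpr hc).to_subtype, finiteIndex_iff_finite_quotient.mpr this⟩

end TwoGenerated

namespace Hgrp

variable {p t s : ℕ}

theorem aa_pow : aa p t s ^ p ^ t = 1 :=
  (map_pow _ _ _).symm.trans (PresentedGroup.one_of_mem (by simp [HRels]))

theorem bb_pow : bb p t s ^ p ^ s = 1 :=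
  (map_pow _ _ _).symm.trans (PresentedGroup.one_of_mem (by simp [HRels]))

theorem cc_pow : cc p t s ^ p = 1 :=
  (map_pow _ _ _).symm.trans (PresentedGroup.one_of_mem (by simp [HRels]))

theorem commutatorElement_aa_bb : ⁅aa p t s, bb p t s⁆ = cc p t s :=
  (map_commutatorElement _ _ _).symm.trans
    (PresentedGroup.mk_eq_mk_of_mul_inv_mem (by simp only [HRels]; simp))

theorem commute_cc_aa : Commute (cc p t s) (aa p t s) :=
  commutatorElement_eq_one_iff_commute.mp
    ((map_commutatorElement _ _ _).symm.trans (PresentedGroup.one_of_mem (by simp [HRels])))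

theorem commute_cc_bb : Commute (cc p t s) (bb p t s) :=
  commutatorElement_eq_one_iff_commute.mp
    ((map_commutatorElement _ _ _).symm.trans (PresentedGroup.one_of_mem (by simp [HRels])))

theorem closure_aa_bb : closure {aa p t s, bb p t s} = ⊤ := by
  have ha : aa p t s ∈ closure {aa p t s, bb p t s} := subset_closure (by simp)
  have hb : bb p t s ∈ closure {aa p t s, bb p t s} := subset_closure (by simp)
  rw [eq_top_iff, ← PresentedGroup.closure_range_of, closure_le]
  rintro _ ⟨i, rfl⟩
  fin_cases i
  · exact ha
  · exact hb
  · change cc p t s ∈ _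
    rw [← commutatorElement_aa_bb, commutatorElement_def]
    exact mul_mem (mul_mem (mul_mem ha hb) (inv_mem ha)) (inv_mem hb)

theorem commutatorElement_mem_zpowers_cc (g h : Hgrp p t s) :
    ⁅g, h⁆ ∈ zpowers (cc p t s) := by
  rw [← commutatorElement_aa_bb]
  exact commutatorElement_mem_zpowers closure_aa_bb (commutatorElement_aa_bb ▸ commute_cc_aa)
    (commutatorElement_aa_bb ▸ commute_cc_bb) g h

theorem commute_commutatorElement (g h k : Hgrp p t s) : Commute ⁅g, h⁆ k := by
  obtain ⟨n, hn⟩ := mem_zpowers_iff.mp (commutatorElement_mem_zpowers_cc g h)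
  exact hn ▸
    (commute_of_closure_pair_eq_top closure_aa_bb commute_cc_aa commute_cc_bb k).zpow_left n

theorem commutatorElement_pow (g h : Hgrp p t s) : ⁅g, h⁆ ^ p = 1 := by
  obtain ⟨n, hn⟩ := mem_zpowers_iff.mp (commutatorElement_mem_zpowers_cc g h)
  rw [← hn, ← zpow_natCast, ← zpow_mul, mul_comm, zpow_mul, zpow_natCast, cc_pow, one_zpow]

theorem finite (hp : 0 < p) : Finite (Hgrp p t s) := by
  have hpow {n : ℕ} {g : Hgrp p t s} (h : g ^ p ^ n = 1) : IsOfFinOrder g :=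
    isOfFinOrder_iff_pow_eq_one.mpr ⟨p ^ n, by positivity, h⟩
  refine finite_of_closure_pair_eq_top closure_aa_bb (hpow aa_pow) (hpow bb_pow) ?_ ?_ ?_ <;>
    rw [commutatorElement_aa_bb]
  exacts [commute_cc_aa, commute_cc_bb, hpow (n := 1) (by simpa using cc_pow)]

theorem exists_hom_aa_bb {G : Type*} [Group G] {x y : G} (hx : x ^ p ^ t = 1) (hy : y ^ p ^ s = 1)
    (hxy : ⁅x, y⁆ ^ p = 1) (hxyx : Commute ⁅x, y⁆ x) (hxyy : Commute ⁅x, y⁆ y) :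
    ∃ φ : Hgrp p t s →* G, φ (aa p t s) = x ∧ φ (bb p t s) = y := by
  have hrels : ∀ r ∈ HRels p t s, FreeGroup.lift ![x, y, ⁅x, y⁆] r = 1 := by
    simp only [HRels, Set.mem_insert_iff, Set.mem_singleton_iff]
    rintro r (rfl | rfl | rfl | rfl | rfl | rfl) <;>
      simp [map_commutatorElement, -commutatorElement_inv, commutatorElement_eq_one_iff_commute, *]
  exact ⟨PresentedGroup.toGroup hrels, PresentedGroup.toGroup.of hrels,
    PresentedGroup.toGroup.of hrels⟩

end Hgrp

theorem stmt5_general (p t s : ℕ) (hp : p.Prime)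
    (x y : Hgrp p t s)
    (hx : orderOf x = p ^ t) (hy : orderOf y = p ^ s)
    (hgen : Subgroup.closure {x, y} = (⊤ : Subgroup (Hgrp p t s))) :
    ∃ φ : Hgrp p t s ≃* Hgrp p t s, φ (aa p t s) = x ∧ φ (bb p t s) = y := by
  have := Hgrp.finite (t := t) (s := s) hp.pos
  obtain ⟨φ, ha, hb⟩ := Hgrp.exists_hom_aa_bb (hx ▸ pow_orderOf_eq_one x)
    (hy ▸ pow_orderOf_eq_one y) (Hgrp.commutatorElement_pow x y)
    (Hgrp.commute_commutatorElement x y x) (Hgrp.commute_commutatorElement x y y)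
  have hsurj : Function.Surjective φ := by
    rw [← MonoidHom.range_eq_top, ← hgen, ← ha, ← hb, ← Set.image_pair, ← MonoidHom.map_closure,
      Hgrp.closure_aa_bb, MonoidHom.range_eq_map]
  exact ⟨.ofBijective φ ⟨Finite.injective_iff_surjective.mpr hsurj, hsurj⟩, ha, hb⟩

theorem stmt5 (p t s : ℕ) (hp : p.Prime) (hodd : Odd p) (hs : 1 ≤ s) (hts : s ≤ t)
    (x y : Hgrp p t s)
    (hx : orderOf x = p ^ t) (hy : orderOf y = p ^ s)
    (hgen : Subgroup.closure {x, y} = (⊤ : Subgroup (Hgrp p t s))) :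
    ∃ φ : Hgrp p t s ≃* Hgrp p t s, φ (aa p t s) = x ∧ φ (bb p t s) = y :=
  stmt5_general p t s hp x y hx hy hgen
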